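/- arXiv:1512.00773 — 2 statements merged into one kernel-verified Lean document; each statement's English description precedes it below -/
import Mathlib

section
/- Let M be a torsion abelian group and N > 0 an integer. If the N-torsion subgroup M[N] is finite, then the quotient M/NM is finite. -/
/-- Multiplication by `N` as an additive group homomorphism. -/
def nsmulHom (M : Type*) [AddCommGroup M] (N : ℕ) : M →+ M :=
  AddMonoidHom.mk' (fun x => N • x) (fun a b => smul_add N a b)

theorem aux_card_quot_eq_card_ker {A : Type*} [AddCommGroup A] [Finite A] (N : ℕ) :
    Nat.card (A ⧸ (nsmulHom A N).range) = Nat.card ((nsmulHom A N).ker) := by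
  have h1 : Nat.card A = Nat.card (A ⧸ (nsmulHom A N).range) * Nat.card ((nsmulHom A N).range) :=
    AddSubgroup.card_eq_card_quotient_mul_card_addSubgroup _
  have h2 : Nat.card A = Nat.card (A ⧸ (nsmulHom A N).ker) * Nat.card ((nsmulHom A N).ker) :=
    AddSubgroup.card_eq_card_quotient_mul_card_addSubgroup _
  have h3 : Nat.card (A ⧸ (nsmulHom A N).ker) = Nat.card ((nsmulHom A N).range) :=
    Nat.card_congr (QuotientAddGroup.quotientKerEquivRange (nsmulHom A N)).toEquiv
  have hpos : 0 < Nat.card ((nsmulHom A N).range) := Nat.card_pos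
  rw [h3] at h2
  rw [h2, mul_comm (Nat.card (A ⧸ (nsmulHom A N).range))] at h1
  exact (Nat.eq_of_mul_eq_mul_left hpos h1.symm)

/-- If `M` is a torsion abelian group, `N > 0`, and the `N`-torsion
subgroup `M[N]` is finite, then `M/NM` is finite. -/
theorem stmt_0 {M : Type*} [AddCommGroup M] (htor : AddMonoid.IsTorsion M)
    (N : ℕ) (hN : 0 < N) (hfin : Finite ((nsmulHom M N).ker)) :
    Finite (M ⧸ (nsmulHom M N).range) := by
  by_contra hinf
  rw [not_finite_iff_infinite] at hinf
  set c := Nat.card ((nsmulHom M N).ker) with hc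
  obtain ⟨f, hf⟩ := Infinite.natEmbedding (M ⧸ (nsmulHom M N).range)
  choose x hx using fun i : Fin (c + 1) => QuotientAddGroup.mk_surjective (f i)
  set A : AddSubgroup M := AddSubgroup.closure (Set.range x) with hA
  have hfg : AddGroup.FG A := by
    rw [AddGroup.fg_iff_addSubgroup_fg, hA]
    exact (AddSubgroup.fg_iff _).mpr ⟨Set.range x, rfl, Set.finite_range x⟩
  have htorA : AddMonoid.IsTorsion A := fun g =>
    AddSubmonoid.isOfFinAddOrder_coe.1 (htor (g : M))
  have hAfin : Finite A := AddCommGroup.finite_of_fg_torsion A htorA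
  -- kernel of nsmul on A injects into kernel on M
  have hkerle : Nat.card ((nsmulHom A N).ker) ≤ c := by
    rw [hc]
    have : Finite ((nsmulHom M N).ker) := hfin
    refine Nat.card_le_card_of_injective
      (fun a => ⟨(a : A), ?_⟩ : ((nsmulHom A N).ker) → ((nsmulHom M N).ker)) ?_
    · have ha := a.2
      simp only [AddMonoidHom.mem_ker, nsmulHom, AddMonoidHom.mk'_apply] at ha ⊢
      exact_mod_cast congrArg (Subtype.val) ha
    · intro a b hab
      have h := congrArg Subtype.val hab
      exact Subtype.ext (Subtype.ext h)
  have hquot : Nat.card (A ⧸ (nsmulHom A N).range) ≤ c := by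
    rw [aux_card_quot_eq_card_ker]; exact hkerle
  -- build injection Fin (c+1) → A ⧸ range
  have hmem : ∀ i, x i ∈ A := fun i => AddSubgroup.subset_closure ⟨i, rfl⟩
  set g : Fin (c + 1) → A ⧸ (nsmulHom A N).range :=
    fun i => QuotientAddGroup.mk ⟨x i, hmem i⟩ with hg
  have hginj : Function.Injective g := by
    intro i j hij
    rw [hg] at hij
    have h1 : (⟨x i, hmem i⟩ - ⟨x j, hmem j⟩ : A) ∈ (nsmulHom A N).range :=
      (QuotientAddGroup.eq_iff_sub_mem).mp hij
    obtain ⟨a, ha⟩ := h1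
    have h2 : x i - x j ∈ (nsmulHom M N).range := by
      refine ⟨(a : M), ?_⟩
      have := congrArg Subtype.val ha
      simpa [nsmulHom] using this
    have : f i = f j := by
      rw [← hx i, ← hx j]
      exact (QuotientAddGroup.eq_iff_sub_mem).mpr h2
    exact Fin.val_injective (hf this)
  have : c + 1 ≤ c := by
    calc c + 1 = Nat.card (Fin (c + 1)) := by simp
    _ ≤ Nat.card (A ⧸ (nsmulHom A N).range) := Nat.card_le_card_of_injective g hginj
    _ ≤ c := hquot
  omega
end

section
/- Let 1 → K → G → Q → 1 be an extension of profinite groups where Q is finite and K is a topologically finitely generated pro-l group for some prime l. Then the Frattini subgroup of G is open in G. -/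
/-!
Write `D = K^l [K, K]` for the abstract subgroup of `K` generated by `l`-th powers and
commutators. For an open subgroup `U` of `K`, the quotient `K / U D` is an elementary abelian
`l`-group generated by the images of the `|T|` topological generators, so `[K : U D] ≤ l ^ |T|`;
hence the subgroups `U D` have a smallest member `N`, and `N` is open. In every finite quotient
of `K`, an `l`-group, the image of `D` lies in the Frattini subgroup, so an open subgroup `H` of
`K` with `H D = K` is all of `K`. If a maximal open subgroup `M` of `G` did not contain `N`,
then `M N = G`, so `M D = G` and, by Dedekind's law, `(M ∩ K) D = K`; hence `K ≤ M`, and `N ≤ M`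
after all. So `N ≤ Φ(G)`, and `Φ(G)` is open.
-/

open scoped commutatorElement

/-- The set of maximal (proper) open subgroups of a topological group. -/
def maxOpenSubgroups (G : Type*) [Group G] [TopologicalSpace G] : Set (Subgroup G) :=
  {K | IsOpen (K : Set G) ∧ K ≠ ⊤ ∧
    ∀ K' : Subgroup G, IsOpen (K' : Set G) → K < K' → K' = ⊤}

/-- The Frattini subgroup of a topological group: the intersection of all maximal open
subgroups. -/
def frattiniOpen (G : Type*) [Group G] [TopologicalSpace G] : Subgroup G :=
  sInf (maxOpenSubgroups G)

section

variable {G : Type*} [Group G] {l : ℕ}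

variable (G l) in
def powCommutator : Subgroup G :=
  Subgroup.closure {x | (∃ y : G, y ^ l = x) ∨ ∃ y z : G, ⁅y, z⁆ = x}

theorem powCommutator_le_iff {H : Subgroup G} :
    powCommutator G l ≤ H ↔ (∀ y : G, y ^ l ∈ H) ∧ ∀ y z : G, ⁅y, z⁆ ∈ H := by
  simp only [powCommutator, Subgroup.closure_le, Set.subset_def, Set.mem_ofPred_eq,
    SetLike.mem_coe]
  constructor
  · exact fun h => ⟨fun y => h _ (Or.inl ⟨y, rfl⟩), fun y z => h _ (Or.inr ⟨y, z, rfl⟩)⟩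
  · rintro ⟨hpow, hcomm⟩ x (⟨y, rfl⟩ | ⟨y, z, rfl⟩)
    exacts [hpow y, hcomm y z]

theorem pow_mem_powCommutator (y : G) : y ^ l ∈ powCommutator G l :=
  (powCommutator_le_iff.mp le_rfl).1 y

theorem commutatorElement_mem_powCommutator (y z : G) : ⁅y, z⁆ ∈ powCommutator G l :=
  (powCommutator_le_iff.mp le_rfl).2 y z

theorem map_powCommutator_le {H : Type*} [Group H] (f : G →* H) :
    (powCommutator G l).map f ≤ powCommutator H l := by
  rw [Subgroup.map_le_iff_le_comap, powCommutator_le_iff]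
  refine ⟨fun y => ?_, fun y z => ?_⟩
  · simpa only [Subgroup.mem_comap, map_pow] using pow_mem_powCommutator (f y)
  · simpa only [Subgroup.mem_comap, map_commutatorElement] using
      commutatorElement_mem_powCommutator (f y) (f z)

instance powCommutator_characteristic : (powCommutator G l).Characteristic :=
  Subgroup.characteristic_iff_map_le.mpr fun ϕ => map_powCommutator_le ϕ.toMonoidHom

theorem commutator_le_powCommutator : commutator G ≤ powCommutator G l := by
  rw [commutator_eq_closure, Subgroup.closure_le]
  rintro _ ⟨y, z, rfl⟩
  exact commutatorElement_mem_powCommutator y z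

theorem Subgroup.Normal.of_powCommutator_le {H : Subgroup G} (h : powCommutator G l ≤ H) :
    H.Normal :=
  .of_commutator_le _ (commutator_le_powCommutator.trans h)

theorem powCommutator_le_of_index_eq {M : Subgroup G} [M.Normal] (hl : l.Prime)
    (hM : M.index = l) : powCommutator G l ≤ M := by
  have : Fact l.Prime := ⟨hl⟩
  have : IsCyclic (G ⧸ M) := isCyclic_of_prime_card (p := l) hM
  have hcomm : commutator G ≤ M :=
    Subgroup.Normal.quotient_commutative_iff_commutator_le.mp IsCyclic.isMulCommutative
  refine powCommutator_le_iff.mpr ⟨fun y => hM ▸ M.pow_index_mem y, fun y z => ?_⟩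
  exact hcomm (Subgroup.commutator_mem_commutator (Subgroup.mem_top y) (Subgroup.mem_top z))

theorem IsPGroup.index_eq_of_isCoatom [Finite G] (hl : l.Prime) (hG : IsPGroup l G)
    {M : Subgroup G} [M.Normal] (hM : IsCoatom M) : M.index = l := by
  have : Fact l.Prime := ⟨hl⟩
  have : IsSimpleOrder (Set.Ici M) := Set.isSimpleOrder_Ici_iff_isCoatom.mpr hM
  have : IsSimpleOrder (Subgroup (G ⧸ M)) :=
    @OrderIso.isSimpleOrder _ (Set.Ici M) _ _ _ _ _ (QuotientGroup.comapMk'OrderIso M)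
  have : Nontrivial (G ⧸ M) := QuotientGroup.nontrivial_iff.mpr hM.1
  have hdvd : l ∣ Nat.card (G ⧸ M) :=
    ((hG.to_quotient M).card_eq_or_dvd).resolve_left Finite.one_lt_card.ne'
  obtain ⟨g, hg⟩ := exists_prime_orderOf_dvd_card' l hdvd
  have hgen : Subgroup.zpowers g = ⊤ :=
    (IsSimpleOrder.eq_bot_or_eq_top _).resolve_left
      (Subgroup.zpowers_ne_bot.mpr (by rintro rfl; simp [hl.ne_one.symm] at hg))
  rw [Subgroup.index, ← hg, ← Nat.card_zpowers, hgen, Subgroup.card_top]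

theorem IsPGroup.powCommutator_le_frattini [Finite G] (hl : l.Prime) (hG : IsPGroup l G) :
    powCommutator G l ≤ frattini G := by
  have : Fact l.Prime := ⟨hl⟩
  refine le_iInf₂ fun M hM => ?_
  have : Group.IsNilpotent G := hG.isNilpotent
  have : M.Normal :=
    Subgroup.NormalizerCondition.normal_of_coatom M Group.normalizerCondition_of_isNilpotent hM
  exact powCommutator_le_of_index_eq hl (hG.index_eq_of_isCoatom hl hM)

theorem card_le_pow_card_of_closure_eq_top {C : Type*} [CommGroup C] (hl : 0 < l)
    (hexp : ∀ x : C, x ^ l = 1) {s : Finset C} (hs : Subgroup.closure (s : Set C) = ⊤) :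
    Nat.card C ≤ l ^ s.card := by
  have hmon : Submonoid.closure (s : Set C) = ⊤ := by
    rw [← Subgroup.closure_toSubmonoid_of_isOfFinOrder
      fun x _ => isOfFinOrder_iff_pow_eq_one.mpr ⟨l, hl, hexp x⟩, hs, Subgroup.top_toSubmonoid]
  have hsurj : Function.Surjective fun a : s → Fin l => ∏ i : s, i.1 ^ (a i : ℕ) := by
    intro x
    obtain ⟨a, rfl⟩ := Submonoid.mem_closure_finset'.mp (hmon ▸ Submonoid.mem_top x)
    exact ⟨fun i => ⟨a i % l, Nat.mod_lt _ hl⟩,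
      Finset.prod_congr rfl fun i _ => (pow_eq_pow_mod _ (hexp _)).symm⟩
  calc Nat.card C ≤ Nat.card (s → Fin l) := Nat.card_le_card_of_surjective _ hsurj
    _ = l ^ s.card := by simp [Nat.card_fun]

open scoped IsMulCommutative in
theorem index_le_pow_card_of_powCommutator_le (hl : 0 < l) {W : Subgroup G}
    (hW : powCommutator G l ≤ W) {T : Finset G} (hT : Subgroup.closure (T : Set G) ⊔ W = ⊤) :
    W.index ≤ l ^ T.card := by
  classical
  have : W.Normal := .of_powCommutator_le hW
  have : IsMulCommutative (G ⧸ W) := Subgroup.Normal.quotient_commutative_iff_commutator_le.mpr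
    (commutator_le_powCommutator.trans hW)
  have hexp : ∀ x : G ⧸ W, x ^ l = 1 := by
    rintro ⟨y⟩
    exact (QuotientGroup.eq_one_iff _).mpr (hW (pow_mem_powCommutator y))
  have hgen :
      Subgroup.closure ((T.image (QuotientGroup.mk' W) : Finset (G ⧸ W)) : Set (G ⧸ W)) = ⊤ := by
    rw [Finset.coe_image, ← MonoidHom.map_closure, ← sup_bot_eq (Subgroup.map _ _),
      ← QuotientGroup.map_mk'_self W, ← Subgroup.map_sup, hT,
      Subgroup.map_top_of_surjective _ (QuotientGroup.mk'_surjective W)]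
  calc W.index ≤ l ^ (T.image (QuotientGroup.mk' W)).card :=
        card_le_pow_card_of_closure_eq_top hl hexp hgen
    _ ≤ l ^ T.card := Nat.pow_le_pow_right hl Finset.card_image_le

theorem Subgroup.exists_forall_le_of_index_le {ι : Type*} [Nonempty ι] {f : ι → Subgroup G}
    (hf : Directed (· ≥ ·) f) [∀ i, (f i).FiniteIndex] {B : ℕ} (hB : ∀ i, (f i).index ≤ B) :
    ∃ i, ∀ j, f i ≤ f j := by
  have hbdd : BddAbove (Set.range fun i => (f i).index) := ⟨B, Set.forall_mem_range.mpr hB⟩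
  obtain ⟨i, hi⟩ := Nat.sSup_mem (Set.range_nonempty _) hbdd
  refine ⟨i, fun j => ?_⟩
  obtain ⟨k, hik, hjk⟩ := hf i j
  have hki : f k = f i := hik.eq_of_not_lt fun hlt =>
    (Subgroup.index_strictAnti hlt).not_ge ((le_csSup hbdd ⟨k, rfl⟩).trans_eq hi.symm)
  exact hki ▸ hjk

section Topological

variable {K : Type*} [Group K] [TopologicalSpace K] [IsTopologicalGroup K]

theorem Subgroup.sup_eq_top_of_topologicalClosure_eq_top {H U : Subgroup K}
    (hH : H.topologicalClosure = ⊤) (hU : IsOpen (U : Set K)) : H ⊔ U = ⊤ :=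
  top_le_iff.mp <| hH ▸ H.topologicalClosure_minimal le_sup_left
    ((H ⊔ U).isClosed_of_isOpen (Subgroup.isOpen_mono le_sup_right hU))

theorem Subgroup.finiteIndex_of_isOpen [CompactSpace K] {H : Subgroup K}
    (hH : IsOpen (H : Set K)) : H.FiniteIndex :=
  have : Finite (K ⧸ H) := H.quotient_finite_of_isOpen hH
  H.finiteIndex_of_finite_quotient

theorem Subgroup.isOpen_normalCore [CompactSpace K] {H : Subgroup K}
    (hH : IsOpen (H : Set K)) : IsOpen (H.normalCore : Set K) :=
  have : H.FiniteIndex := finiteIndex_of_isOpen hH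
  H.normalCore.isOpen_of_isClosed_of_finiteIndex (H.normalCore_isClosed (H.isClosed_of_isOpen hH))

theorem exists_isOpen_forall_le_sup_powCommutator [CompactSpace K] (hl : 0 < l) {T : Finset K}
    (hT : (Subgroup.closure (T : Set K)).topologicalClosure = ⊤) :
    ∃ N : Subgroup K, IsOpen (N : Set K) ∧
      ∀ U : Subgroup K, IsOpen (U : Set K) → N ≤ U ⊔ powCommutator K l := by
  have hopen (U : OpenSubgroup K) : IsOpen ((U ⊔ powCommutator K l : Subgroup K) : Set K) :=
    Subgroup.isOpen_mono le_sup_left U.isOpen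
  have (U : OpenSubgroup K) : ((U : Subgroup K) ⊔ powCommutator K l).FiniteIndex :=
    Subgroup.finiteIndex_of_isOpen (hopen U)
  obtain ⟨U₀, hU₀⟩ := Subgroup.exists_forall_le_of_index_le
    (f := fun U : OpenSubgroup K => (U : Subgroup K) ⊔ powCommutator K l)
    (fun U V => ⟨U ⊓ V, sup_le_sup_right inf_le_left _, sup_le_sup_right inf_le_right _⟩)
    fun U => index_le_pow_card_of_powCommutator_le hl le_sup_right
      (Subgroup.sup_eq_top_of_topologicalClosure_eq_top hT (hopen U))
  exact ⟨_, hopen U₀, fun U hU => hU₀ ⟨U, hU⟩⟩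

theorem eq_top_of_sup_powCommutator_eq_top [CompactSpace K] (hl : l.Prime)
    (hprol : ∀ (U : Subgroup K) [U.Normal], IsOpen (U : Set K) → Finite (K ⧸ U) →
      IsPGroup l (K ⧸ U))
    {H : Subgroup K} (hH : IsOpen (H : Set K)) (hsup : H ⊔ powCommutator K l = ⊤) : H = ⊤ := by
  have hV : IsOpen (H.normalCore : Set K) := Subgroup.isOpen_normalCore hH
  have : Finite (K ⧸ H.normalCore) := H.normalCore.quotient_finite_of_isOpen hV
  have hp : IsPGroup l (K ⧸ H.normalCore) := hprol _ hV this
  set π := QuotientGroup.mk' H.normalCore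
  have hπH : H.map π = ⊤ := by
    refine frattini_nongenerating (top_le_iff.mp ?_)
    calc ⊤ = (H ⊔ powCommutator K l).map π := by
          rw [hsup, Subgroup.map_top_of_surjective _ (QuotientGroup.mk'_surjective _)]
      _ = H.map π ⊔ (powCommutator K l).map π := Subgroup.map_sup _ _ _
      _ ≤ H.map π ⊔ frattini _ := sup_le_sup_left
          ((map_powCommutator_le π).trans (hp.powCommutator_le_frattini hl)) _
  have hker : π.ker ≤ H := by rw [QuotientGroup.ker_mk']; exact H.normalCore_le
  rw [← Subgroup.comap_map_eq_self hker, hπH, Subgroup.comap_top]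

end Topological

theorem Subgroup.subgroupOf_sup_eq_top {M K : Subgroup G} {D : Subgroup K}
    [(D.map K.subtype).Normal] (h : M ⊔ D.map K.subtype = ⊤) : M.subgroupOf K ⊔ D = ⊤ := by
  rw [eq_top_iff]
  rintro k -
  have hk : (k : G) ∈ ((M ⊔ D.map K.subtype : Subgroup G) : Set G) := by rw [h]; trivial
  rw [Subgroup.mul_normal] at hk
  obtain ⟨m, hm, _, ⟨d, hd, rfl⟩, hmd⟩ := hk
  have hmK : m ∈ K := by
    rw [eq_mul_inv_of_mul_eq hmd]
    exact mul_mem k.2 (inv_mem d.2)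
  rw [show k = ⟨m, hmK⟩ * d from Subtype.ext hmd.symm]
  exact Subgroup.mul_mem_sup (Subgroup.mem_subgroupOf.mpr hm) hd

theorem map_subtype_le_frattiniOpen [TopologicalSpace G] [IsTopologicalGroup G] {K : Subgroup G}
    [K.Normal] {D N : Subgroup K} [D.Characteristic]
    (hD : ∀ H : Subgroup K, IsOpen (H : Set K) → H ⊔ D = ⊤ → H = ⊤)
    (hN : ∀ U : Subgroup K, IsOpen (U : Set K) → N ≤ U ⊔ D) :
    N.map K.subtype ≤ frattiniOpen G := by
  refine le_sInf fun M ⟨hMo, _, hMmax⟩ => ?_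
  have hHo : IsOpen (M.subgroupOf K : Set K) := hMo.preimage continuous_subtype_val
  by_contra hNM
  have hMN : M ⊔ N.map K.subtype = ⊤ :=
    hMmax _ (Subgroup.isOpen_mono le_sup_left hMo) (left_lt_sup.mpr hNM)
  have hMD : M ⊔ D.map K.subtype = ⊤ := by
    refine top_le_iff.mp (hMN ▸ sup_le le_sup_left ?_)
    calc N.map K.subtype ≤ (M.subgroupOf K ⊔ D).map K.subtype :=
          Subgroup.map_mono (hN _ hHo)
      _ = M ⊓ K ⊔ D.map K.subtype := by rw [Subgroup.map_sup, Subgroup.subgroupOf_map_subtype]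
      _ ≤ M ⊔ D.map K.subtype := sup_le_sup_right inf_le_left _
  have hKM : K ≤ M := Subgroup.subgroupOf_eq_top.mp
    (hD _ hHo (Subgroup.subgroupOf_sup_eq_top hMD))
  exact hNM ((Subgroup.map_subtype_le N).trans hKM)

end

theorem stmt_16_general (G Q : Type*) [Group G] [TopologicalSpace G] [IsTopologicalGroup G]
    [CompactSpace G] [Group Q]
    (φ : G →* Q)
    (hker_open : IsOpen ((φ.ker : Subgroup G) : Set G))
    (l : ℕ) (hl : Nat.Prime l)
    (hfg : ∃ T : Finset ↥φ.ker,
      (Subgroup.closure (T : Set ↥φ.ker)).topologicalClosure = ⊤)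
    (hprol : ∀ (U : Subgroup ↥φ.ker) [U.Normal], IsOpen (U : Set ↥φ.ker) →
      Finite (↥φ.ker ⧸ U) → IsPGroup l (↥φ.ker ⧸ U)) :
    IsOpen ((frattiniOpen G : Subgroup G) : Set G) := by
  obtain ⟨T, hT⟩ := hfg
  have : CompactSpace φ.ker :=
    isCompact_iff_compactSpace.mp (φ.ker.isClosed_of_isOpen hker_open).isCompact
  obtain ⟨N, hNo, hN⟩ := exists_isOpen_forall_le_sup_powCommutator hl.pos hT
  have hNΦ : N.map φ.ker.subtype ≤ frattiniOpen G :=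
    map_subtype_le_frattiniOpen (fun _ => eq_top_of_sup_powCommutator_eq_top hl hprol) hN
  exact Subgroup.isOpen_mono hNΦ (hker_open.isOpenMap_subtype_val _ hNo)

/-- Let `1 → K → G → Q → 1` be an extension of profinite groups with `Q`
finite and `K = ker φ` a topologically finitely generated pro-`l` group (`l` prime). Then the
Frattini subgroup of `G` is open in `G`. -/
theorem stmt_16 (G Q : Type*) [Group G] [TopologicalSpace G] [IsTopologicalGroup G]
    [CompactSpace G] [TotallyDisconnectedSpace G] [T2Space G] [Group Q] [Finite Q]
    (φ : G →* Q) (hφ : Function.Surjective φ)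
    (hker_open : IsOpen ((φ.ker : Subgroup G) : Set G))
    (l : ℕ) (hl : Nat.Prime l)
    (hfg : ∃ T : Finset ↥φ.ker,
      (Subgroup.closure (T : Set ↥φ.ker)).topologicalClosure = ⊤)
    (hprol : ∀ (U : Subgroup ↥φ.ker) [U.Normal], IsOpen (U : Set ↥φ.ker) →
      Finite (↥φ.ker ⧸ U) → IsPGroup l (↥φ.ker ⧸ U)) :
    IsOpen ((frattiniOpen G : Subgroup G) : Set G) :=
  stmt_16_general G Q φ hker_open l hl hfg hprol
end
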